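/- Assume u1 ≠ u2. Let f = (f11, f12, f22) ∈ C²_c(S²; D1). If L⁰ f (= Lf), L¹ f, and Tf all vanish identically on ℝ², then f11 ≡ f12 ≡ f22 ≡ 0. (A symmetric 2-tensor field is uniquely determined by its longitudinal V-line transform, the first moment longitudinal V-line transform, and its transverse V-line transform, provided u1 ≠ u2.) -/

import Mathlib

noncomputable section

open MeasureTheory

/-- The divergent beam transform `X_w h (x) = ∫₀^∞ h(x + t w) dt`. -/
def Xbeam (w : ℝ × ℝ) (h : ℝ × ℝ → ℝ) (x : ℝ × ℝ) : ℝ :=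
  ∫ t in Set.Ioi (0 : ℝ), h (x + t • w)

/-- The k-th moment divergent beam transform `X_w^k h (x) = ∫₀^∞ t^k h(x + t w) dt`. -/
def Xmom (k : ℕ) (w : ℝ × ℝ) (h : ℝ × ℝ → ℝ) (x : ℝ × ℝ) : ℝ :=
  ∫ t in Set.Ioi (0 : ℝ), t ^ k * h (x + t • w)

/-- The directional derivative `D_w h = w ⋅ ∇h`. -/
def Dir (w : ℝ × ℝ) (h : ℝ × ℝ → ℝ) (x : ℝ × ℝ) : ℝ :=
  fderiv ℝ h x w

/-- Support contained in the open unit disc `D1`. -/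
def SuppInDisc (h : ℝ × ℝ → ℝ) : Prop :=
  ∀ x : ℝ × ℝ, 1 ≤ x.1 ^ 2 + x.2 ^ 2 → h x = 0

/-- The longitudinal V-line transform. -/
def VlineL (u1 u2 : ℝ) (f11 f12 f22 : ℝ × ℝ → ℝ) : ℝ × ℝ → ℝ :=
  Xbeam (u1, u2) (fun y => u1 ^ 2 * f11 y + 2 * u1 * u2 * f12 y + u2 ^ 2 * f22 y)
    + Xbeam (-u1, u2) (fun y => u1 ^ 2 * f11 y - 2 * u1 * u2 * f12 y + u2 ^ 2 * f22 y)

/-- The transverse V-line transform. -/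
def VlineT (u1 u2 : ℝ) (f11 f12 f22 : ℝ × ℝ → ℝ) : ℝ × ℝ → ℝ :=
  Xbeam (u1, u2) (fun y => u2 ^ 2 * f11 y - 2 * u1 * u2 * f12 y + u1 ^ 2 * f22 y)
    + Xbeam (-u1, u2) (fun y => u2 ^ 2 * f11 y + 2 * u1 * u2 * f12 y + u1 ^ 2 * f22 y)

/-- The mixed V-line transform. -/
def VlineM (u1 u2 : ℝ) (f11 f12 f22 : ℝ × ℝ → ℝ) : ℝ × ℝ → ℝ :=
  Xbeam (u1, u2) (fun y => -(u1 * u2) * f11 y + (u1 ^ 2 - u2 ^ 2) * f12 y + u1 * u2 * f22 y)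
    + Xbeam (-u1, u2) (fun y => u1 * u2 * f11 y + (u1 ^ 2 - u2 ^ 2) * f12 y - u1 * u2 * f22 y)

/-- The k-th moment longitudinal V-line transform. -/
def VlineLk (k : ℕ) (u1 u2 : ℝ) (f11 f12 f22 : ℝ × ℝ → ℝ) : ℝ × ℝ → ℝ :=
  Xmom k (u1, u2) (fun y => u1 ^ 2 * f11 y + 2 * u1 * u2 * f12 y + u2 ^ 2 * f22 y)
    + Xmom k (-u1, u2) (fun y => u1 ^ 2 * f11 y - 2 * u1 * u2 * f12 y + u2 ^ 2 * f22 y)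

/-- The k-th moment transverse V-line transform. -/
def VlineTk (k : ℕ) (u1 u2 : ℝ) (f11 f12 f22 : ℝ × ℝ → ℝ) : ℝ × ℝ → ℝ :=
  Xmom k (u1, u2) (fun y => u2 ^ 2 * f11 y - 2 * u1 * u2 * f12 y + u1 ^ 2 * f22 y)
    + Xmom k (-u1, u2) (fun y => u2 ^ 2 * f11 y + 2 * u1 * u2 * f12 y + u1 ^ 2 * f22 y)

/-- The k-th moment mixed V-line transform. -/
def VlineMk (k : ℕ) (u1 u2 : ℝ) (f11 f12 f22 : ℝ × ℝ → ℝ) : ℝ × ℝ → ℝ :=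
  Xmom k (u1, u2) (fun y => -(u1 * u2) * f11 y + (u1 ^ 2 - u2 ^ 2) * f12 y + u1 * u2 * f22 y)
    + Xmom k (-u1, u2) (fun y => u1 * u2 * f11 y + (u1 ^ 2 - u2 ^ 2) * f12 y - u1 * u2 * f22 y)

/-!
Since `X_w (D_w h) = -h` and `X_w¹ (D_w h) = -X_w h` for compactly supported `h`, and directional
derivatives commute with `X_wᵏ`, differentiating `Lf = 0` along `u` and `v`, and `L¹f = 0` along
`u` and then `v`, shows that the longitudinal integrands `g_u`, `g_v` satisfy `g_u + g_v = 0` and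
`D_v g_u + D_u g_v = 0`. Hence `D_{v-u} g_u = 0`, and compact support forces `g_u = g_v = 0`, i.e.
`f12 = 0` and `u1² f11 + u2² f22 = 0`. Once `f12 = 0` both transverse integrands equal
`q = u2² f11 + u1² f22`, and the same differentiation of `Tf = 0` gives `D_{u+v} q = 0`, so `q = 0`.
The two linear relations between `f11` and `f22` are independent because `u1 ≠ u2`.
-/

open Set Filter Topology
open scoped Pointwise

section Line

variable {E : Type*} [NormedAddCommGroup E] [NormedSpace ℝ E] {h : E → ℝ} {w : E}

theorem HasCompactSupport.comp_line {F : Type*} [Zero F] {g : E → F} (hs : HasCompactSupport g)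
    (hw : w ≠ 0) (x : E) : HasCompactSupport fun t : ℝ => g (x + t • w) :=
  (hs.comp_homeomorph (Homeomorph.addLeft x)).comp_isClosedEmbedding
    (isClosedEmbedding_smul_left hw)

theorem HasCompactSupport.tendsto_comp_line_atTop (hs : HasCompactSupport h) (hw : w ≠ 0)
    (x : E) (k : ℕ) : Tendsto (fun t : ℝ => t ^ k * h (x + t • w)) atTop (𝓝 0) :=
  ((hs.comp_line hw x).mul_left (f := fun t : ℝ => t ^ k)).is_zero_at_infty.mono_left
    atTop_le_cocompact

theorem hasDerivAt_comp_line (hh : Differentiable ℝ h) (x w : E) (t : ℝ) :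
    HasDerivAt (fun s : ℝ => h (x + s • w)) (fderiv ℝ h (x + t • w) w) t := by
  have hline : HasDerivAt (fun s : ℝ => x + s • w) w t := by
    simpa using ((hasDerivAt_id t).smul_const w).const_add x
  exact (hh _).hasFDerivAt.comp_hasDerivAt t hline

theorem eq_zero_of_fderiv_apply_eq_zero (hh : Differentiable ℝ h) (hs : HasCompactSupport h)
    (hw : w ≠ 0) (hdir : ∀ z, fderiv ℝ h z w = 0) (x : E) : h x = 0 := by
  have hconst : ∀ t : ℝ, h (x + t • w) = h x := fun t => by
    simpa using is_const_of_deriv_eq_zero (fun s => (hasDerivAt_comp_line hh x w s).differentiableAt)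
      (fun s => by rw [(hasDerivAt_comp_line hh x w s).deriv, hdir]) t 0
  have := hs.tendsto_comp_line_atTop hw x 0
  simp only [pow_zero, one_mul, hconst] at this
  exact tendsto_nhds_unique tendsto_const_nhds this

end Line

section Beam

variable {h : ℝ × ℝ → ℝ} {w : ℝ × ℝ}

theorem Xbeam_eq_Xmom_zero : Xbeam = Xmom 0 := by
  ext w h x
  simp [Xbeam, Xmom]

theorem integrableOn_pow_mul_comp_line (hc : Continuous h) (hs : HasCompactSupport h)
    (hw : w ≠ 0) (k : ℕ) (x : ℝ × ℝ) :
    IntegrableOn (fun t : ℝ => t ^ k * h (x + t • w)) (Ioi (0 : ℝ)) :=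
  (Continuous.integrable_of_hasCompactSupport (by fun_prop)
    ((hs.comp_line hw x).mul_left (f := fun t : ℝ => t ^ k))).integrableOn

theorem hasFDerivAt_Xmom (hh : ContDiff ℝ 1 h) (hs : HasCompactSupport h) (hw : w ≠ 0)
    (k : ℕ) (x₀ : ℝ × ℝ) :
    HasFDerivAt (Xmom k w h) (∫ t in Ioi (0 : ℝ), t ^ k • fderiv ℝ h (x₀ + t • w)) x₀ := by
  have hcont : Continuous (fderiv ℝ h) := hh.continuous_fderiv one_ne_zero
  obtain ⟨C, hC⟩ := hcont.bounded_above_of_compact_support (hs.fderiv ℝ)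
  set S : Set ℝ := (fun t : ℝ => t • w) ⁻¹' (tsupport (fderiv ℝ h) + Metric.closedBall (-x₀) 1)
  have hS : IsCompact S := (isClosedEmbedding_smul_left (𝕜 := ℝ) hw).isCompact_preimage
    ((hs.fderiv ℝ).isCompact.add (isCompact_closedBall (-x₀) 1))
  have hfar : ∀ t ∉ S, ∀ x ∈ Metric.ball x₀ 1, fderiv ℝ h (x + t • w) = 0 := by
    intro t ht x hx
    refine image_eq_zero_of_notMem_tsupport fun hmem => ht ?_
    exact ⟨x + t • w, hmem, -x, by simpa [dist_comm] using (Metric.mem_ball.1 hx).le, by simp⟩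
  refine hasFDerivAt_integral_of_dominated_of_fderiv_le (Metric.ball_mem_nhds x₀ one_pos)
    (F' := fun x t => t ^ k • fderiv ℝ h (x + t • w))
    (bound := S.indicator fun t => ‖t ^ k‖ * C) ?_ ?_ ?_ ?_ ?_ ?_
  · exact Eventually.of_forall fun x => (by fun_prop : Continuous _).aestronglyMeasurable
  · exact integrableOn_pow_mul_comp_line hh.continuous hs hw k x₀
  · exact (by fun_prop : Continuous _).aestronglyMeasurable
  · refine Eventually.of_forall fun t x hx => ?_
    by_cases ht : t ∈ S
    · rw [indicator_of_mem ht, norm_smul]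
      exact mul_le_mul_of_nonneg_left (hC _) (norm_nonneg _)
    · simp [indicator_of_notMem ht, hfar t ht x hx]
  · exact (integrable_indicator_iff hS.measurableSet).2
      ((by fun_prop : Continuous fun t : ℝ => ‖t ^ k‖ * C).continuousOn.integrableOn_compact hS)
  · refine Eventually.of_forall fun t x _ => ?_
    have hline := (hasFDerivAt_id (𝕜 := ℝ) x).add_const (t • w)
    simpa using ((hh.differentiable one_ne_zero _).hasFDerivAt.comp x hline).const_mul (t ^ k)

theorem dir_Xmom (hh : ContDiff ℝ 1 h) (hs : HasCompactSupport h) (hw : w ≠ 0)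
    (k : ℕ) (y x : ℝ × ℝ) : Dir y (Xmom k w h) x = Xmom k w (Dir y h) x := by
  have hint : IntegrableOn (fun t : ℝ => t ^ k • fderiv ℝ h (x + t • w)) (Ioi (0 : ℝ)) :=
    Continuous.integrable_of_hasCompactSupport (by fun_prop)
      (((hs.fderiv ℝ).comp_line hw x).smul_left (f := fun t : ℝ => t ^ k))
  show fderiv ℝ (Xmom k w h) x y = _
  rw [(hasFDerivAt_Xmom hh hs hw k x).fderiv, ContinuousLinearMap.integral_apply hint]
  simp [Xmom, Dir]

end Beam

section Dir

variable {h : ℝ × ℝ → ℝ} {w : ℝ × ℝ}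

theorem HasCompactSupport.dir (hs : HasCompactSupport h) (y : ℝ × ℝ) :
    HasCompactSupport (Dir y h) :=
  hs.fderiv_apply ℝ y

theorem ContDiff.dir {m n : WithTop ℕ∞} (hh : ContDiff ℝ n h) (hmn : m + 1 ≤ n) (y : ℝ × ℝ) :
    ContDiff ℝ m (Dir y h) :=
  (hh.fderiv_right hmn).clm_apply contDiff_const

theorem ContDiff.continuous_dir (hh : ContDiff ℝ 1 h) (y : ℝ × ℝ) : Continuous (Dir y h) :=
  (hh.dir (m := 0) (by norm_num) y).continuous

theorem Xmom_zero_dir_self (hh : ContDiff ℝ 1 h) (hs : HasCompactSupport h) (hw : w ≠ 0)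
    (x : ℝ × ℝ) : Xmom 0 w (Dir w h) x = -h x := by
  have hint := integrableOn_pow_mul_comp_line (hh.continuous_dir w) (hs.dir w) hw 0 x
  simp only [pow_zero, one_mul] at hint
  have key := integral_Ioi_of_hasDerivAt_of_tendsto'
    (fun t _ => hasDerivAt_comp_line (hh.differentiable one_ne_zero) x w t) hint
    (by simpa using hs.tendsto_comp_line_atTop hw x 0)
  simpa [Xmom, Dir] using key

theorem Xmom_one_dir_self (hh : ContDiff ℝ 1 h) (hs : HasCompactSupport h) (hw : w ≠ 0)
    (x : ℝ × ℝ) : Xmom 1 w (Dir w h) x = -Xmom 0 w h x := by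
  have hint₀ := integrableOn_pow_mul_comp_line hh.continuous hs hw 0 x
  have hint₁ := integrableOn_pow_mul_comp_line (hh.continuous_dir w) (hs.dir w) hw 1 x
  have hlim := hs.tendsto_comp_line_atTop hw x 1
  simp only [pow_zero, pow_one, one_mul] at hint₀ hint₁ hlim
  have hderiv (t : ℝ) : HasDerivAt (fun t => t * h (x + t • w))
      (h (x + t • w) + t * Dir w h (x + t • w)) t := by
    have := (hasDerivAt_id' t).mul (hasDerivAt_comp_line (hh.differentiable one_ne_zero) x w t)
    rwa [one_mul] at this
  have key := integral_Ioi_of_hasDerivAt_of_tendsto' (fun t _ => hderiv t) (hint₀.add hint₁) hlim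
  rw [integral_add hint₀ hint₁] at key
  simp only [Xmom, pow_zero, pow_one, one_mul]
  simp only [zero_mul, sub_zero, zero_smul, add_zero] at key
  linarith

end Dir

section VLine

variable {u v : ℝ × ℝ} {a b : ℝ × ℝ → ℝ}

theorem Xmom_dir_add_Xmom_dir_eq_zero (ha : ContDiff ℝ 1 a) (hb : ContDiff ℝ 1 b)
    (has : HasCompactSupport a) (hbs : HasCompactSupport b) (hu : u ≠ 0) (hv : v ≠ 0) {k : ℕ}
    (hab : ∀ x, Xmom k u a x + Xmom k v b x = 0) (y x : ℝ × ℝ) :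
    Xmom k u (Dir y a) x + Xmom k v (Dir y b) x = 0 := by
  have hsum : Xmom k u a + Xmom k v b = 0 := funext hab
  rw [← dir_Xmom ha has hu, ← dir_Xmom hb hbs hv, Dir, Dir, ← add_apply,
    ← fderiv_add (hasFDerivAt_Xmom ha has hu k x).differentiableAt
      (hasFDerivAt_Xmom hb hbs hv k x).differentiableAt]
  simp [hsum]

theorem Xmom_zero_dir_eq_of_Xmom_zero_add_eq_zero (ha : ContDiff ℝ 1 a) (hb : ContDiff ℝ 1 b)
    (has : HasCompactSupport a) (hbs : HasCompactSupport b) (hu : u ≠ 0) (hv : v ≠ 0)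
    (hab : ∀ x, Xmom 0 u a x + Xmom 0 v b x = 0) (x : ℝ × ℝ) :
    Xmom 0 u (Dir v a) x = b x := by
  have := Xmom_dir_add_Xmom_dir_eq_zero ha hb has hbs hu hv hab v x
  rw [Xmom_zero_dir_self hb hbs hv] at this
  linarith

theorem dir_add_dir_eq_zero_of_Xmom_zero_add_eq_zero (ha : ContDiff ℝ 2 a) (hb : ContDiff ℝ 1 b)
    (has : HasCompactSupport a) (hbs : HasCompactSupport b) (hu : u ≠ 0) (hv : v ≠ 0)
    (hab : ∀ x, Xmom 0 u a x + Xmom 0 v b x = 0) (x : ℝ × ℝ) :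
    Dir v a x + Dir u b x = 0 := by
  have hva : ContDiff ℝ 1 (Dir v a) := ha.dir (by norm_num) v
  have hXva : Xmom 0 u (Dir v a) = b :=
    funext (Xmom_zero_dir_eq_of_Xmom_zero_add_eq_zero (ha.of_le one_le_two) hb has hbs hu hv hab)
  have := dir_Xmom hva (has.dir v) hu 0 u x
  rw [hXva, Xmom_zero_dir_self hva (has.dir v) hu] at this
  linarith

theorem add_eq_zero_of_Xmom_add_eq_zero (ha : ContDiff ℝ 1 a) (hb : ContDiff ℝ 2 b)
    (has : HasCompactSupport a) (hbs : HasCompactSupport b) (hu : u ≠ 0) (hv : v ≠ 0)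
    (hab₀ : ∀ x, Xmom 0 u a x + Xmom 0 v b x = 0) (hab₁ : ∀ x, Xmom 1 u a x + Xmom 1 v b x = 0)
    (x : ℝ × ℝ) : a x + b x = 0 := by
  have hb₁ : ContDiff ℝ 1 b := hb.of_le one_le_two
  have hub : ContDiff ℝ 1 (Dir u b) := hb.dir (by norm_num) u
  have hX₁ : Xmom 1 v (Dir u b) = Xmom 0 u a := funext fun z => by
    have := Xmom_dir_add_Xmom_dir_eq_zero ha hb₁ has hbs hu hv hab₁ u z
    rw [Xmom_one_dir_self ha has hu] at this
    linarith
  have hba : ∀ z, Xmom 0 v b z + Xmom 0 u a z = 0 := fun z => by rw [add_comm]; exact hab₀ z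
  have := dir_Xmom hub (hbs.dir u) hv 1 v x
  rw [hX₁, dir_Xmom ha has hu, Xmom_one_dir_self hub (hbs.dir u) hv,
    Xmom_zero_dir_eq_of_Xmom_zero_add_eq_zero ha hb₁ has hbs hu hv hab₀,
    Xmom_zero_dir_eq_of_Xmom_zero_add_eq_zero hb₁ ha hbs has hv hu hba] at this
  linarith

theorem eq_zero_of_Xmom_zero_add_eq_zero_of_Xmom_one_add_eq_zero (ha : ContDiff ℝ 2 a)
    (hb : ContDiff ℝ 2 b) (has : HasCompactSupport a) (hbs : HasCompactSupport b) (hu : u ≠ 0)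
    (hv : v ≠ 0) (huv : u ≠ v) (hab₀ : ∀ x, Xmom 0 u a x + Xmom 0 v b x = 0)
    (hab₁ : ∀ x, Xmom 1 u a x + Xmom 1 v b x = 0) : a = 0 ∧ b = 0 := by
  have hba : b = -a := funext fun x => by
    have := add_eq_zero_of_Xmom_add_eq_zero (ha.of_le one_le_two) hb has hbs hu hv hab₀ hab₁ x
    simp only [Pi.neg_apply]
    linarith
  have hdir : ∀ x, Dir (v - u) a x = 0 := fun x => by
    have := dir_add_dir_eq_zero_of_Xmom_zero_add_eq_zero ha (hb.of_le one_le_two) has hbs hu hv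
      hab₀ x
    rw [hba] at this
    simpa [Dir, fderiv_neg, map_sub, sub_eq_add_neg] using this
  have ha0 : a = 0 := funext (eq_zero_of_fderiv_apply_eq_zero
    (ha.differentiable two_ne_zero) has (sub_ne_zero.2 huv.symm) hdir)
  exact ⟨ha0, by rw [hba, ha0, neg_zero]⟩

theorem eq_zero_of_Xmom_zero_add_Xmom_zero_eq_zero (ha : ContDiff ℝ 2 a)
    (has : HasCompactSupport a) (hu : u ≠ 0) (hv : v ≠ 0) (huv : u + v ≠ 0)
    (h : ∀ x, Xmom 0 u a x + Xmom 0 v a x = 0) : a = 0 := by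
  refine funext (eq_zero_of_fderiv_apply_eq_zero (ha.differentiable two_ne_zero) has huv
    fun x => ?_)
  have := dir_add_dir_eq_zero_of_Xmom_zero_add_eq_zero ha (ha.of_le one_le_two) has has hu hv h x
  simpa [Dir, map_add, add_comm] using this

end VLine

theorem SuppInDisc.hasCompactSupport {h : ℝ × ℝ → ℝ} (hs : SuppInDisc h) :
    HasCompactSupport h := by
  refine HasCompactSupport.intro (isCompact_closedBall 0 1) fun x hx => hs x ?_
  rw [mem_closedBall_zero_iff, Prod.norm_def, not_le, lt_max_iff, Real.norm_eq_abs,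
    Real.norm_eq_abs] at hx
  rcases hx with hx | hx
  · nlinarith [sq_abs x.1, sq_nonneg x.2]
  · nlinarith [sq_abs x.2, sq_nonneg x.1]

theorem eq_zero_of_sq_mul_add_sq_mul_eq_zero {c d p q : ℝ} (hc : 0 < c) (hd : 0 < d) (hcd : c ≠ d)
    (h₁ : c ^ 2 * p + d ^ 2 * q = 0) (h₂ : d ^ 2 * p + c ^ 2 * q = 0) : p = 0 ∧ q = 0 := by
  have hsq : c ^ 2 - d ^ 2 ≠ 0 := by
    rw [sq_sub_sq]
    exact mul_ne_zero (by positivity) (sub_ne_zero.2 hcd)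
  have hdiff : p - q = 0 := by
    refine (mul_eq_zero.1 ?_).resolve_left hsq
    linear_combination h₁ - h₂
  have hsum : p + q = 0 := by
    refine (mul_eq_zero.1 ?_).resolve_left (by positivity : c ^ 2 + d ^ 2 ≠ 0)
    linear_combination h₁ + h₂
  constructor <;> linarith

theorem injectivity_L_L1_T_general
    (u1 u2 : ℝ) (hu1 : 0 < u1) (hu2 : 0 < u2)
    (hne : u1 ≠ u2)
    (f11 f12 f22 : ℝ × ℝ → ℝ)
    (h11 : ContDiff ℝ 2 f11) (h12 : ContDiff ℝ 2 f12) (h22 : ContDiff ℝ 2 f22)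
    (s11 : SuppInDisc f11) (s12 : SuppInDisc f12) (s22 : SuppInDisc f22)
    (hL0 : ∀ x : ℝ × ℝ, VlineLk 0 u1 u2 f11 f12 f22 x = 0)
    (hL1 : ∀ x : ℝ × ℝ, VlineLk 1 u1 u2 f11 f12 f22 x = 0)
    (hT : ∀ x : ℝ × ℝ, VlineT u1 u2 f11 f12 f22 x = 0) :
    ∀ x : ℝ × ℝ, f11 x = 0 ∧ f12 x = 0 ∧ f22 x = 0 := by
  have hu : ((u1, u2) : ℝ × ℝ) ≠ 0 := by simp [hu1.ne']
  have hv : ((-u1, u2) : ℝ × ℝ) ≠ 0 := by simp [hu1.ne']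
  have hcs {g : ℝ × ℝ → ℝ} (hg : ∀ x, f11 x = 0 → f12 x = 0 → f22 x = 0 → g x = 0) :
      HasCompactSupport g :=
    SuppInDisc.hasCompactSupport fun x hx => hg x (s11 x hx) (s12 x hx) (s22 x hx)
  obtain ⟨hgu, hgv⟩ := eq_zero_of_Xmom_zero_add_eq_zero_of_Xmom_one_add_eq_zero (by fun_prop)
    (by fun_prop) (hcs fun x h₁ h₂ h₃ => by simp [h₁, h₂, h₃])
    (hcs fun x h₁ h₂ h₃ => by simp [h₁, h₂, h₃]) hu hv (by simp only [ne_eq, Prod.mk.injEq, and_true]; linarith) hL0 hL1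
  have hf12 (x : ℝ × ℝ) : f12 x = 0 := by
    have h₁ := congrFun hgu x
    have h₂ := congrFun hgv x
    simp only [Pi.zero_apply] at h₁ h₂
    have : (4 * u1 * u2) * f12 x = 0 := by linarith
    simpa [hu1.ne', hu2.ne'] using this
  have hq := eq_zero_of_Xmom_zero_add_Xmom_zero_eq_zero
    (a := fun y => u2 ^ 2 * f11 y + u1 ^ 2 * f22 y) (by fun_prop)
    (hcs fun x h₁ _ h₃ => by simp [h₁, h₃]) hu hv (by simpa using hu2.ne')
    fun x => by simpa [VlineT, Xbeam_eq_Xmom_zero, hf12] using hT x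
  intro x
  have h₁ := congrFun hgu x
  have h₂ := congrFun hq x
  simp only [hf12, Pi.zero_apply, mul_zero, add_zero] at h₁ h₂
  obtain ⟨h11x, h22x⟩ := eq_zero_of_sq_mul_add_sq_mul_eq_zero hu1 hu2 hne h₁ h₂
  exact ⟨h11x, hf12 x, h22x⟩

/-- for `u1 ≠ u2`, a symmetric 2-tensor field is uniquely determined
by `Lf`, `L¹f`, and `Tf`. -/
theorem injectivity_L_L1_T
    (u1 u2 : ℝ) (hu : u1 ^ 2 + u2 ^ 2 = 1) (hu1 : 0 < u1) (hu2 : 0 < u2)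
    (hne : u1 ≠ u2)
    (f11 f12 f22 : ℝ × ℝ → ℝ)
    (h11 : ContDiff ℝ 2 f11) (h12 : ContDiff ℝ 2 f12) (h22 : ContDiff ℝ 2 f22)
    (s11 : SuppInDisc f11) (s12 : SuppInDisc f12) (s22 : SuppInDisc f22)
    (hL0 : ∀ x : ℝ × ℝ, VlineLk 0 u1 u2 f11 f12 f22 x = 0)
    (hL1 : ∀ x : ℝ × ℝ, VlineLk 1 u1 u2 f11 f12 f22 x = 0)
    (hT : ∀ x : ℝ × ℝ, VlineT u1 u2 f11 f12 f22 x = 0) :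
    ∀ x : ℝ × ℝ, f11 x = 0 ∧ f12 x = 0 ∧ f22 x = 0 :=
  injectivity_L_L1_T_general u1 u2 hu1 hu2 hne f11 f12 f22 h11 h12 h22 s11 s12 s22 hL0 hL1 hT
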